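/- arXiv:1904.07675 — 4 statements merged into one kernel-verified Lean document; each statement's English description precedes it below -/
import Mathlib

section
/- With the Bernoulli-sequence model and an integer n₁ ≥ 1, the expected number of referred uncles per selfish-mining attack cycle is E[U] = q − q^{n₁+1}; equivalently, μ( {X_0 = S} ∩ {there exists i with 1 ≤ i ≤ n₁ and X_i = H} ) = q − q^{n₁+1}. -/
open MeasureTheory ENNReal
open scoped BigOperators

/-! A cycle refers an uncle exactly when it starts with `S` but is not an initial run of
`n₁ + 1` attacker blocks. The run event lies inside `{X_0 = S}` and has probability
`q^(n₁+1)`, so the event has probability `q - q^(n₁+1)`. -/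

namespace BoolSeq

theorem measurableSet_forall_lt_eq_true (n : ℕ) :
    MeasurableSet {ω : ℕ → Bool | ∀ i < n, ω i = true} := by
  measurability

theorem head_inter_exists_false_eq_diff (n : ℕ) :
    {ω : ℕ → Bool | ω 0 = true} ∩ {ω | ∃ i, 1 ≤ i ∧ i ≤ n ∧ ω i = false} =
      {ω | ω 0 = true} \ {ω | ∀ i < n + 1, ω i = true} := by
  ext ω
  simp only [Set.mem_inter_iff, Set.mem_sdiff, Set.mem_ofPred_eq, not_forall,
    Bool.not_eq_true, exists_prop, and_congr_right_iff]
  intro h0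
  constructor
  · rintro ⟨i, -, hin, hi⟩
    exact ⟨i, by omega, hi⟩
  · rintro ⟨i, hin, hi⟩
    have hi0 : i ≠ 0 := by rintro rfl; simp [h0] at hi
    exact ⟨i, by omega, by omega, hi⟩

theorem measure_forall_lt_eq_true {μ : Measure (ℕ → Bool)} {a b : ℝ≥0∞}
    (hμ : ∀ (n : ℕ) (w : Fin n → Bool),
      μ {ω | ∀ i : Fin n, ω i = w i} = ∏ i : Fin n, (if w i then a else b)) (n : ℕ) :
    μ {ω | ∀ i < n, ω i = true} = a ^ n := by
  have hset : {ω : ℕ → Bool | ∀ i < n, ω i = true} =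
      {ω | ∀ i : Fin n, ω i = (fun _ => true) i} := by
    ext ω
    exact ⟨fun h i => h i i.isLt, fun h i hi => h ⟨i, hi⟩⟩
  simp [hset, hμ]

end BoolSeq

/-- Blocks are labelled by `Bool`: `true` = `S` (attacker block), `false` = `H`
(honest block). -/
theorem expected_referred_uncles_general (q p : ℝ) (hq0 : 0 < q) (n₁ : ℕ)
    (μ : Measure (ℕ → Bool)) [IsProbabilityMeasure μ]
    (hμ : ∀ (n : ℕ) (w : Fin n → Bool),
      μ {ω | ∀ i : Fin n, ω i = w i} =
        ∏ i : Fin n, (if w i then ENNReal.ofReal q else ENNReal.ofReal p)) :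
    μ ({ω | ω 0 = true} ∩ {ω | ∃ i, 1 ≤ i ∧ i ≤ n₁ ∧ ω i = false}) =
      ENNReal.ofReal (q - q ^ (n₁ + 1)) := by
  have hrun := BoolSeq.measure_forall_lt_eq_true hμ (n₁ + 1)
  have hhead : μ {ω | ω 0 = true} = ENNReal.ofReal q := by
    simpa using BoolSeq.measure_forall_lt_eq_true hμ 1
  have hsub : {ω : ℕ → Bool | ∀ i < n₁ + 1, ω i = true} ⊆ {ω | ω 0 = true} :=
    fun ω h => h 0 n₁.succ_pos
  rw [BoolSeq.head_inter_exists_false_eq_diff, measure_sdiff hsub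
    (BoolSeq.measurableSet_forall_lt_eq_true _).nullMeasurableSet (by simp),
    hhead, hrun, ← ENNReal.ofReal_pow hq0.le, ← ENNReal.ofReal_sub _ (by positivity)]

/-- Blocks are labelled by `Bool`: `true` = `S` (attacker block), `false` = `H`
(honest block). The expected number of referred uncles per selfish-mining attack cycle
is `E[U] = q - q^(n₁+1)`: the event `{U = 1}` is
`{X_0 = S} ∩ {∃ i, 1 ≤ i ≤ n₁, X_i = H}`. -/
theorem expected_referred_uncles (q p : ℝ) (hq0 : 0 < q) (hq : q < 1 / 2)
    (hp : p = 1 - q) (n₁ : ℕ) (hn₁ : 1 ≤ n₁)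
    (μ : Measure (ℕ → Bool)) [IsProbabilityMeasure μ]
    (hμ : ∀ (n : ℕ) (w : Fin n → Bool),
      μ {ω | ∀ i : Fin n, ω i = w i} =
        ∏ i : Fin n, (if w i then ENNReal.ofReal q else ENNReal.ofReal p)) :
    μ ({ω | ω 0 = true} ∩ {ω | ∃ i, 1 ≤ i ∧ i ≤ n₁ ∧ ω i = false}) =
      ENNReal.ofReal (q - q ^ (n₁ + 1)) :=
  expected_referred_uncles_general q p hq0 n₁ μ hμ
end

section
/- With the Bernoulli-sequence model and an integer n₁ ≥ 2, for 2 ≤ k ≤ n₁ let A_k be the event {X_i = S for all 0 ≤ i < k, and X_j = H for all k ≤ j < 2k − 1} (the attack cycle is S^k H^{k−1}). The events A_2, …, A_{n₁} are pairwise disjoint and μ( A_2 ∪ … ∪ A_{n₁} ) = pq²·(1 − (pq)^{n₁−1})/(1 − pq). Equivalently, the expected number E[V] of uncles created during a selfish-mining attack cycle and referred only in a strictly later cycle equals pq²·(1 − (pq)^{n₁−1})/(1 − pq). -/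
open MeasureTheory ENNReal
open scoped BigOperators

/-- Blocks are labelled by `Bool`: `true` = `S` (attacker block), `false` = `H`
(honest block). `cycleA k` is the event that the attack cycle is `S^k H^(k-1)`:
`X_i = S` for all `0 ≤ i < k` and `X_j = H` for all `k ≤ j < 2k - 1`. -/
def cycleA (k : ℕ) : Set (ℕ → Bool) :=
  {ω | (∀ i, i < k → ω i = true) ∧ ∀ j, k ≤ j → j < 2 * k - 1 → ω j = false}

lemma cycleA_eq (k : ℕ) (hk : 1 ≤ k) :
    cycleA k = {ω | ∀ i : Fin (2 * k - 1), ω i = decide ((i : ℕ) < k)} := by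
  ext ω
  simp only [cycleA, Set.mem_setOf_eq]
  constructor
  · rintro ⟨h1, h2⟩ i
    by_cases hik : (i : ℕ) < k
    · simp [hik, h1 _ hik]
    · simp [hik, h2 _ (le_of_not_gt hik) i.isLt]
  · intro h
    constructor
    · intro i hi
      have hi' : i < 2 * k - 1 := by omega
      have := h ⟨i, hi'⟩
      simpa [hi] using this
    · intro j hj hj'
      have := h ⟨j, hj'⟩
      simp only [not_lt.2 hj] at this
      simpa using this

lemma cycleA_meas (k : ℕ) (hk : 1 ≤ k) : MeasurableSet (cycleA k) := by
  rw [cycleA_eq k hk]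
  have : {ω : ℕ → Bool | ∀ i : Fin (2 * k - 1), ω i = decide ((i : ℕ) < k)} =
      ⋂ i : Fin (2 * k - 1), (fun ω : ℕ → Bool => ω i) ⁻¹' {decide ((i : ℕ) < k)} := by
    ext ω; simp [Set.mem_iInter]
  rw [this]
  exact MeasurableSet.iInter fun i => (measurable_pi_apply _) (measurableSet_singleton _)

/-- The events `A_2, …, A_{n₁}` are pairwise disjoint and
`μ(A_2 ∪ … ∪ A_{n₁}) = pq² (1 - (pq)^(n₁-1)) / (1 - pq)`; equivalently, the expected
number `E[V]` of uncles created during a selfish-mining cycle and referred only in a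
strictly later cycle equals `pq² (1 - (pq)^(n₁-1)) / (1 - pq)`. -/
theorem expected_V (q p : ℝ) (hq0 : 0 < q) (hq : q < 1 / 2) (hp : p = 1 - q)
    (n₁ : ℕ) (hn₁ : 2 ≤ n₁)
    (μ : Measure (ℕ → Bool)) [IsProbabilityMeasure μ]
    (hμ : ∀ (n : ℕ) (w : Fin n → Bool),
      μ {ω | ∀ i : Fin n, ω i = w i} =
        ∏ i : Fin n, (if w i then ENNReal.ofReal q else ENNReal.ofReal p)) :
    (∀ k ∈ Finset.Icc 2 n₁, ∀ l ∈ Finset.Icc 2 n₁, k ≠ l →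
        Disjoint (cycleA k) (cycleA l)) ∧
    μ (⋃ k ∈ Finset.Icc 2 n₁, cycleA k) =
      ENNReal.ofReal (p * q ^ 2 * (1 - (p * q) ^ (n₁ - 1)) / (1 - p * q)) := by
  have hp0 : 0 < p := by rw [hp]; linarith
  have hq1 : q < 1 := by linarith
  have hp1 : p < 1 := by rw [hp]; linarith
  have hpq1 : p * q < 1 := by nlinarith
  -- disjointness
  have hdisj : ∀ k ∈ Finset.Icc 2 n₁, ∀ l ∈ Finset.Icc 2 n₁, k ≠ l →
      Disjoint (cycleA k) (cycleA l) := by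
    have key : ∀ k l : ℕ, 2 ≤ k → k < l → Disjoint (cycleA k) (cycleA l) := by
      intro k l hk hkl
      rw [Set.disjoint_left]
      rintro ω ⟨h1, h2⟩ ⟨h1', _⟩
      have hT : ω k = true := h1' k hkl
      have hF : ω k = false := h2 k le_rfl (by omega)
      rw [hT] at hF; exact Bool.noConfusion hF
    intro k hk l hl hne
    simp only [Finset.mem_Icc] at hk hl
    rcases lt_or_gt_of_ne hne with h | h
    · exact key k l hk.1 h
    · exact (key l k hl.1 h).symm
  refine ⟨hdisj, ?_⟩
  -- measure of each cycleA k
  have hmeas : ∀ k ∈ Finset.Icc 2 n₁,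
      μ (cycleA k) = ENNReal.ofReal (q ^ k * p ^ (k - 1)) := by
    intro k hk
    simp only [Finset.mem_Icc] at hk
    have hk1 : 1 ≤ k := by omega
    rw [cycleA_eq k hk1, hμ (2 * k - 1) (fun i => decide ((i : ℕ) < k))]
    have : ∀ i : Fin (2 * k - 1),
        (if decide ((i : ℕ) < k) then ENNReal.ofReal q else ENNReal.ofReal p) =
        (if (i : ℕ) < k then ENNReal.ofReal q else ENNReal.ofReal p) := by
      intro i; by_cases h : (i : ℕ) < k <;> simp [h]
    rw [Finset.prod_congr rfl (fun i _ => this i), Fin.prod_univ_eq_prod_range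
      (fun i => if i < k then ENNReal.ofReal q else ENNReal.ofReal p)]
    have h2k : 2 * k - 1 = k + (k - 1) := by omega
    rw [h2k, Finset.prod_range_add]
    have e1 : ∏ i ∈ Finset.range k,
        (if i < k then ENNReal.ofReal q else ENNReal.ofReal p) = (ENNReal.ofReal q) ^ k := by
      have h1 : ∀ i ∈ Finset.range k,
          (if i < k then ENNReal.ofReal q else ENNReal.ofReal p) = ENNReal.ofReal q :=
        fun i hi => by simp [Finset.mem_range.1 hi]
      rw [Finset.prod_congr rfl h1, Finset.prod_const, Finset.card_range]
    have e2 : ∏ i ∈ Finset.range (k - 1),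
        (if k + i < k then ENNReal.ofReal q else ENNReal.ofReal p) =
        (ENNReal.ofReal p) ^ (k - 1) := by
      have h1 : ∀ i ∈ Finset.range (k - 1),
          (if k + i < k then ENNReal.ofReal q else ENNReal.ofReal p) = ENNReal.ofReal p :=
        fun i _ => by simp
      rw [Finset.prod_congr rfl h1, Finset.prod_const, Finset.card_range]
    rw [e1, e2, ← ENNReal.ofReal_pow hq0.le, ← ENNReal.ofReal_pow hp0.le,
      ← ENNReal.ofReal_mul (by positivity)]
  -- union
  rw [measure_biUnion_finset
    (fun k hk l hl hne => hdisj k hk l hl hne)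
    (fun k hk => cycleA_meas k (by simp only [Finset.mem_Icc] at hk; omega)),
    Finset.sum_congr rfl hmeas,
    ← ENNReal.ofReal_sum_of_nonneg (fun k _ => by positivity)]
  congr 1
  -- real computation
  have hre : ∑ k ∈ Finset.Icc 2 n₁, q ^ k * p ^ (k - 1) =
      ∑ j ∈ Finset.range (n₁ - 1), p * q ^ 2 * (p * q) ^ j := by
    rw [show Finset.Icc 2 n₁ = Finset.Ico 2 (n₁ + 1) from by
      ext x; simp [Nat.lt_succ_iff], Finset.sum_Ico_eq_sum_range]
    have hn : n₁ + 1 - 2 = n₁ - 1 := by omega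
    rw [hn]
    refine Finset.sum_congr rfl fun j _ => ?_
    have h1 : 2 + j - 1 = j + 1 := by omega
    rw [h1, show 2 + j = j + 2 from by omega]
    ring
  have hne1 : p * q - 1 ≠ 0 := ne_of_lt (by linarith)
  have hne2 : 1 - p * q ≠ 0 := ne_of_gt (by linarith)
  rw [hre, ← Finset.mul_sum, geom_sum_eq (fun h => hne1 (by rw [h]; ring)) (n₁ - 1)]
  field_simp
  ring
end

section
/- Let (X_i)_{i∈ℕ} and (X′_i)_{i∈ℕ} be two independent i.i.d. sequences with values in {S,H}, each with probability q of S and p of H, and let G′ be a Bernoulli random variable of parameter γ independent of both. Let n₁ ≥ 2 be an integer. Define V = 1 if there exists k with 2 ≤ k ≤ n₁ such that X_i = S for all 0 ≤ i < k and X_j = H for all k ≤ j < 2k − 1, and V = 0 otherwise; let E′ be the event {X′_0 = H} ∪ {X′_0 = S, X′_1 = H, X′_2 = H, G′ = 0}; and set U_h = 1_{{X_0 = S, X_1 = H, X_2 = H}} + 1_{E′}·V (the number of uncles created in the cycle and referred by honest nephews). Then E[U_h] = p²q + ( p + (1 − γ)p²q )·pq²·(1 − (pq)^{n₁−1})/(1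 − pq). -/
open MeasureTheory ENNReal
open scoped BigOperators Classical

/-- Blocks are labelled by `Bool`: `true` = `S` (attacker block), `false` = `H`
(honest block). `V = 1` iff the cycle (given by the first sequence) is `S^k H^(k-1)`
for some `2 ≤ k ≤ n₁`. -/
noncomputable def Vval (n₁ : ℕ) (ω : ℕ → Bool) : ℕ :=
  if ∃ k, 2 ≤ k ∧ k ≤ n₁ ∧ (∀ i, i < k → ω i = true) ∧
      ∀ j, k ≤ j → j < 2 * k - 1 → ω j = false then 1 else 0

/-- `U_h = 1_{X_0 = S, X_1 = H, X_2 = H} + 1_{E'} · V`, where `E'` is the event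
`{X'_0 = H} ∪ {X'_0 = S, X'_1 = H, X'_2 = H, G' = 0}`: the number of uncles created in
the cycle and referred by honest nephews. The point of the augmented space is
`x = (ω, ω', g)` with `ω = (X_i)`, `ω' = (X'_i)` and `g = G'`. -/
noncomputable def Uh (n₁ : ℕ) (x : (ℕ → Bool) × (ℕ → Bool) × Bool) : ℕ :=
  (if x.1 0 = true ∧ x.1 1 = false ∧ x.1 2 = false then 1 else 0) +
    (if x.2.1 0 = false ∨
        (x.2.1 0 = true ∧ x.2.1 1 = false ∧ x.2.1 2 = false ∧ x.2.2 = false)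
      then 1 else 0) * Vval n₁ x.1

/-!
Only finitely many coordinates of the sample enter `U_h`, and the hypothesis on `ν` says that
the law of the first `n` coordinates of `(X, X', G')` is a product of Bernoulli laws. Hence
every event involved is a cylinder whose probability is a product of `p`'s and `q`'s. The events
`X ∈ S^k H^(k-1)` for distinct `k ≥ 2` are disjoint (they disagree at position `k`), and `E'` is
the disjoint union of `{X'_0 = H}` and `{X' ∈ SHH, G' = 0}`, so
`E[U_h] = p²q + ∑_{k=2}^{n₁} q^k p^(k-1) (p + (1-γ)p²q)`, a geometric sum.
-/

namespace SelfishMining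

open Finset

section Prefixes

variable {α β : Type*} [MeasurableSpace α] [MeasurableSpace β]
  {ν : Measure ((ℕ → α) × (ℕ → α) × β)} {μ : Measure α} {ρ : Measure β}

def prefixes (n : ℕ) (x : (ℕ → α) × (ℕ → α) × β) : (Fin n → α) × (Fin n → α) × β :=
  (fun i => x.1 i, fun i => x.2.1 i, x.2.2)

lemma measurable_prefixes (n : ℕ) : Measurable (prefixes (α := α) (β := β) n) := by
  unfold prefixes
  fun_prop

theorem map_prefixes_eq [MeasurableSingletonClass α] [Countable α] [MeasurableSingletonClass β]
    [Countable β] [SigmaFinite μ] [SigmaFinite ρ]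
    (hν : ∀ (n : ℕ) (w w' : Fin n → α) (g : β),
      ν {x | (∀ i : Fin n, x.1 i = w i) ∧ (∀ i : Fin n, x.2.1 i = w' i) ∧ x.2.2 = g} =
        (∏ i, μ {w i}) * (∏ i, μ {w' i}) * ρ {g}) (n : ℕ) :
    ν.map (prefixes n) = (Measure.pi fun _ => μ).prod ((Measure.pi fun _ => μ).prod ρ) := by
  refine Measure.ext_of_singleton fun ⟨w, w', g⟩ => ?_
  rw [Measure.map_apply (measurable_prefixes n) (measurableSet_singleton _),
    ← Set.singleton_prod_singleton, ← Set.singleton_prod_singleton, Measure.prod_prod,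
    Measure.prod_prod, Measure.pi_singleton, Measure.pi_singleton, ← mul_assoc, ← hν]
  congr 1
  ext x
  simp [prefixes, funext_iff, Prod.ext_iff]

def prefixCylinder (m : ℕ) (c : ℕ → α) : Set (ℕ → α) := {ω | ∀ i < m, ω i = c i}

lemma measurableSet_prefixCylinder [MeasurableSingletonClass α] (m : ℕ) (c : ℕ → α) :
    MeasurableSet (prefixCylinder m c) := by
  simp only [prefixCylinder, Set.ofPred_forall]
  exact .iInter fun i => .iInter fun _ =>
    (measurableSet_singleton (c i)).preimage (measurable_pi_apply i)

lemma measure_pi_prefix [IsProbabilityMeasure μ] {m n : ℕ} (hmn : m ≤ n) (c : ℕ → α) :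
    Measure.pi (fun _ : Fin n => μ) {w | ∀ i : Fin n, (i : ℕ) < m → w i = c i} =
      ∏ i ∈ range m, μ {c i} := by
  have hpi : {w : Fin n → α | ∀ i : Fin n, (i : ℕ) < m → w i = c i} =
      Set.univ.pi fun i : Fin n => if (i : ℕ) < m then ({c i} : Set α) else Set.univ := by
    ext w
    simp only [Set.mem_ofPred_eq, Set.mem_pi, Set.mem_univ, true_implies]
    refine forall_congr' fun i => ?_
    split_ifs <;> simp [*]
  obtain ⟨d, rfl⟩ := Nat.exists_eq_add_of_le hmn
  rw [hpi, Measure.pi_pi]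
  simp only [apply_ite μ, measure_univ]
  rw [Fin.prod_univ_eq_prod_range (fun i => if i < m then μ {c i} else 1), prod_range_add,
    prod_congr rfl fun i hi => if_pos (mem_range.1 hi)]
  simp

theorem measure_prefixCylinder_prod [MeasurableSingletonClass α] [Countable α]
    [MeasurableSingletonClass β] [Countable β] [IsProbabilityMeasure μ] [SigmaFinite ρ]
    (hν : ∀ (n : ℕ) (w w' : Fin n → α) (g : β),
      ν {x | (∀ i : Fin n, x.1 i = w i) ∧ (∀ i : Fin n, x.2.1 i = w' i) ∧ x.2.2 = g} =
        (∏ i, μ {w i}) * (∏ i, μ {w' i}) * ρ {g})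
    (m m' : ℕ) (c c' : ℕ → α) (G : Set β) :
    ν (prefixCylinder m c ×ˢ prefixCylinder m' c' ×ˢ G) =
      (∏ i ∈ range m, μ {c i}) * (∏ i ∈ range m', μ {c' i}) * ρ G := by
  set n := max m m'
  have hpre : prefixCylinder m c ×ˢ prefixCylinder m' c' ×ˢ G = prefixes n ⁻¹'
      ({w | ∀ i : Fin n, (i : ℕ) < m → w i = c i} ×ˢ
        {w | ∀ i : Fin n, (i : ℕ) < m' → w i = c' i} ×ˢ G) := by
    ext x
    simp only [prefixCylinder, prefixes, Set.mem_prod, Set.mem_ofPred_eq, Set.mem_preimage]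
    refine and_congr ⟨fun h i hi => h i hi, fun h i hi => h ⟨i, by omega⟩ hi⟩
      (and_congr ⟨fun h i hi => h i hi, fun h i hi => h ⟨i, by omega⟩ hi⟩ Iff.rfl)
  rw [hpre, ← Measure.map_apply (measurable_prefixes n) (.of_discrete), map_prefixes_eq hν,
    Measure.prod_prod, Measure.prod_prod, measure_pi_prefix (le_max_left m m'),
    measure_pi_prefix (le_max_right m m'), mul_assoc]

end Prefixes

variable {ν : Measure ((ℕ → Bool) × (ℕ → Bool) × Bool)}

/-- Sequences beginning with the word `S^k H^j` (recall `S = true`). -/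
def prefixSH (k j : ℕ) : Set (ℕ → Bool) := prefixCylinder (k + j) fun i => decide (i < k)

@[simp]
lemma prefixSH_zero_zero : prefixSH 0 0 = Set.univ := by
  simp [prefixSH, prefixCylinder]

lemma measurableSet_prefixSH (k j : ℕ) : MeasurableSet (prefixSH k j) :=
  measurableSet_prefixCylinder _ _

lemma mem_prefixSH_zero_one {ω : ℕ → Bool} : ω ∈ prefixSH 0 1 ↔ ω 0 = false := by
  simp [prefixSH, prefixCylinder]

lemma mem_prefixSH_one_two {ω : ℕ → Bool} :
    ω ∈ prefixSH 1 2 ↔ ω 0 = true ∧ ω 1 = false ∧ ω 2 = false := by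
  simp only [prefixSH, prefixCylinder, Set.mem_ofPred_eq]
  refine ⟨fun h => ⟨h 0 (by norm_num), h 1 (by norm_num), h 2 (by norm_num)⟩, ?_⟩
  rintro ⟨h0, h1, h2⟩ i hi
  interval_cases i <;> assumption

lemma mem_prefixSH_pred {k : ℕ} (hk : 1 ≤ k) {ω : ℕ → Bool} :
    ω ∈ prefixSH k (k - 1) ↔
      (∀ i, i < k → ω i = true) ∧ ∀ j, k ≤ j → j < 2 * k - 1 → ω j = false := by
  simp only [prefixSH, prefixCylinder, Set.mem_ofPred_eq]
  constructor
  · intro h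
    exact ⟨fun i hi => by simpa [hi] using h i (by omega),
      fun j hj hj' => by simpa [Nat.not_lt.2 hj] using h j (by omega)⟩
  · rintro ⟨hS, hH⟩ i hi
    by_cases hik : i < k
    · simpa [hik] using hS i hik
    · simpa [hik] using hH i (by omega) (by omega)

lemma disjoint_prefixSH_pred {k k' : ℕ} (hk : 2 ≤ k) (hkk' : k < k') :
    Disjoint (prefixSH k (k - 1)) (prefixSH k' (k' - 1)) := by
  refine Set.disjoint_left.2 fun ω h h' => ?_
  have hH := ((mem_prefixSH_pred (by omega)).1 h).2 k le_rfl (by omega)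
  have hS := ((mem_prefixSH_pred (by omega)).1 h').1 k hkk'
  simp [hH] at hS

lemma prod_range_decide_lt {M : Type*} [CommMonoid M] (f : Bool → M) (k j : ℕ) :
    ∏ i ∈ range (k + j), f (decide (i < k)) = f true ^ k * f false ^ j := by
  rw [prod_range_add, prod_congr rfl fun i hi => congrArg f (decide_eq_true (mem_range.1 hi))]
  simp

theorem measure_prefixSH_prod {μ ρ : Measure Bool} [IsProbabilityMeasure μ] [SigmaFinite ρ]
    (hν : ∀ (n : ℕ) (w w' : Fin n → Bool) (g : Bool),
      ν {x | (∀ i : Fin n, x.1 i = w i) ∧ (∀ i : Fin n, x.2.1 i = w' i) ∧ x.2.2 = g} =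
        (∏ i, μ {w i}) * (∏ i, μ {w' i}) * ρ {g})
    (k j k' j' : ℕ) (G : Set Bool) :
    ν (prefixSH k j ×ˢ prefixSH k' j' ×ˢ G) =
      μ {true} ^ k * μ {false} ^ j * (μ {true} ^ k' * μ {false} ^ j') * ρ G := by
  rw [prefixSH, prefixSH, measure_prefixCylinder_prod hν,
    prod_range_decide_lt (fun b => μ {b}), prod_range_decide_lt (fun b => μ {b})]

def eventV (n₁ : ℕ) : Set (ℕ → Bool) := ⋃ k ∈ Icc 2 n₁, prefixSH k (k - 1)

def eventE' : Set ((ℕ → Bool) × Bool) := prefixSH 0 1 ×ˢ Set.univ ∪ prefixSH 1 2 ×ˢ {false}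

lemma Vval_eq_indicator (n₁ : ℕ) (ω : ℕ → Bool) :
    (Vval n₁ ω : ℝ≥0∞) = (eventV n₁).indicator 1 ω := by
  have hmem : ω ∈ eventV n₁ ↔ ∃ k, 2 ≤ k ∧ k ≤ n₁ ∧ (∀ i, i < k → ω i = true) ∧
      ∀ j, k ≤ j → j < 2 * k - 1 → ω j = false := by
    simp only [eventV, Set.mem_iUnion, mem_Icc, exists_prop, and_assoc]
    exact exists_congr fun k => and_congr_right fun hk =>
      and_congr_right fun _ => mem_prefixSH_pred (by omega)
  by_cases h : ω ∈ eventV n₁ <;> simp [Vval, h, ← hmem]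

lemma Uh_eq_indicator (n₁ : ℕ) (x : (ℕ → Bool) × (ℕ → Bool) × Bool) :
    (Uh n₁ x : ℝ≥0∞) = (prefixSH 1 2 ×ˢ Set.univ).indicator 1 x +
      (eventV n₁ ×ˢ eventE').indicator 1 x := by
  obtain ⟨ω, ω', g⟩ := x
  have hE' : (ω', g) ∈ eventE' ↔
      ω' 0 = false ∨ (ω' 0 = true ∧ ω' 1 = false ∧ ω' 2 = false ∧ g = false) := by
    simp [eventE', mem_prefixSH_zero_one, mem_prefixSH_one_two, and_assoc]
  rw [Set.indicator_prod_one, Set.indicator_prod_one, ← Vval_eq_indicator]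
  by_cases hA : ω 0 = true ∧ ω 1 = false ∧ ω 2 = false <;>
    by_cases hE : (ω', g) ∈ eventE' <;>
    simp_all [Uh, mem_prefixSH_one_two]

theorem lintegral_Uh (n₁ : ℕ) :
    ∫⁻ x, (Uh n₁ x : ℝ≥0∞) ∂ν = ν (prefixSH 1 2 ×ˢ Set.univ) +
      ∑ k ∈ Icc 2 n₁, (ν (prefixSH k (k - 1) ×ˢ prefixSH 0 1 ×ˢ Set.univ) +
        ν (prefixSH k (k - 1) ×ˢ prefixSH 1 2 ×ˢ {false})) := by
  have hE'₂ : MeasurableSet (prefixSH 1 2 ×ˢ {false}) :=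
    (measurableSet_prefixSH 1 2).prod (measurableSet_singleton false)
  have hE' : MeasurableSet eventE' := ((measurableSet_prefixSH 0 1).prod .univ).union hE'₂
  have hV : MeasurableSet (eventV n₁) :=
    .biUnion (Set.to_countable _) fun k _ => measurableSet_prefixSH k (k - 1)
  have hA : MeasurableSet (prefixSH 1 2 ×ˢ (Set.univ : Set ((ℕ → Bool) × Bool))) :=
    (measurableSet_prefixSH 1 2).prod .univ
  rw [lintegral_congr (Uh_eq_indicator n₁), lintegral_add_left (measurable_one.indicator hA),
    lintegral_indicator_one hA, lintegral_indicator_one (hV.prod hE'), eventV,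
    Set.iUnion₂_prod_const, measure_biUnion_finset]
  · congr 1
    refine sum_congr rfl fun k _ => ?_
    rw [eventE', Set.prod_union, measure_union _ ((measurableSet_prefixSH _ _).prod hE'₂)]
    refine Set.disjoint_prod.2 (.inr (Set.disjoint_prod.2 (.inl ?_)))
    exact Set.disjoint_left.2 fun ω h h' =>
      by simp [mem_prefixSH_zero_one.1 h, mem_prefixSH_one_two] at h'
  · intro k hk k' hk' hne
    simp only [coe_Icc, Set.mem_Icc] at hk hk'
    refine Set.disjoint_prod.2 (.inl ?_)
    rcases hne.lt_or_gt with h | h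
    · exact disjoint_prefixSH_pred hk.1 h
    · exact (disjoint_prefixSH_pred hk'.1 h).symm
  · exact fun k _ => (measurableSet_prefixSH _ _).prod hE'

noncomputable def bernoulliMeasure (r : ℝ) : Measure Bool :=
  ENNReal.ofReal r • Measure.dirac true + ENNReal.ofReal (1 - r) • Measure.dirac false

lemma bernoulliMeasure_singleton (r : ℝ) (b : Bool) :
    bernoulliMeasure r {b} = if b then ENNReal.ofReal r else ENNReal.ofReal (1 - r) := by
  cases b <;> simp [bernoulliMeasure]

lemma isProbabilityMeasure_bernoulliMeasure {r : ℝ} (h0 : 0 ≤ r) (h1 : r ≤ 1) :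
    IsProbabilityMeasure (bernoulliMeasure r) :=
  ⟨by simp [bernoulliMeasure, ← ENNReal.ofReal_add h0 (sub_nonneg.2 h1)]⟩

lemma sum_Icc_two_pow_mul_pow_pred {x y : ℝ} (h : y * x ≠ 1) (n : ℕ) :
    ∑ k ∈ Icc 2 n, x ^ k * y ^ (k - 1) = y * x ^ 2 * (1 - (y * x) ^ (n - 1)) / (1 - y * x) := by
  have hterm : ∀ j, x ^ (2 + j) * y ^ (2 + j - 1) = y * x ^ 2 * (y * x) ^ j := fun j => by
    rw [show 2 + j - 1 = j + 1 by omega]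
    ring
  rw [← Ico_add_one_right_eq_Icc, sum_Ico_eq_sum_range, sum_congr rfl fun j _ => hterm j,
    ← mul_sum, geom_sum_eq h, show n + 1 - 2 = n - 1 by omega, mul_div_assoc,
    ← neg_div_neg_eq, neg_sub, neg_sub]

end SelfishMining

open SelfishMining Finset in
theorem expected_Uh_general (q p γ : ℝ) (hq0 : 0 < q) (hq : q < 1 / 2) (hp : p = 1 - q)
    (hγ0 : 0 ≤ γ) (hγ1 : γ ≤ 1) (n₁ : ℕ)
    (ν : Measure ((ℕ → Bool) × (ℕ → Bool) × Bool))
    (hν : ∀ (n : ℕ) (w w' : Fin n → Bool) (g : Bool),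
      ν {x | (∀ i : Fin n, x.1 i = w i) ∧ (∀ i : Fin n, x.2.1 i = w' i) ∧ x.2.2 = g} =
        (∏ i : Fin n, (if w i then ENNReal.ofReal q else ENNReal.ofReal p)) *
          (∏ i : Fin n, (if w' i then ENNReal.ofReal q else ENNReal.ofReal p)) *
          (if g then ENNReal.ofReal γ else ENNReal.ofReal (1 - γ))) :
    ∫⁻ x, (Uh n₁ x : ℝ≥0∞) ∂ν =
      ENNReal.ofReal (p ^ 2 * q +
        (p + (1 - γ) * p ^ 2 * q) * (p * q ^ 2) * (1 - (p * q) ^ (n₁ - 1)) /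
          (1 - p * q)) := by
  have hp0 : 0 < p := by linarith
  have hγ : 0 ≤ 1 - γ := by linarith
  have := isProbabilityMeasure_bernoulliMeasure hq0.le (by linarith : q ≤ 1)
  have := isProbabilityMeasure_bernoulliMeasure hγ0 hγ1
  simp only [hp, ← bernoulliMeasure_singleton] at hν
  have hS : bernoulliMeasure q {true} = ENNReal.ofReal q := by
    simp [bernoulliMeasure_singleton]
  have hH : bernoulliMeasure q {false} = ENNReal.ofReal p := by
    simp [bernoulliMeasure_singleton, hp]
  have hG : bernoulliMeasure γ {false} = ENNReal.ofReal (1 - γ) := by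
    simp [bernoulliMeasure_singleton]
  have hA : ν (prefixSH 1 2 ×ˢ Set.univ) = ENNReal.ofReal (p ^ 2 * q) := by
    have h := measure_prefixSH_prod hν 1 2 0 0 Set.univ
    rw [prefixSH_zero_zero, Set.univ_prod_univ, measure_univ, hS, hH] at h
    rw [h]
    simp (disch := positivity) only [← ENNReal.ofReal_pow, ← ENNReal.ofReal_mul, pow_zero,
      pow_one, mul_one]
    congr 1
    ring
  have hC : ∀ k, ν (prefixSH k (k - 1) ×ˢ prefixSH 0 1 ×ˢ Set.univ) +
      ν (prefixSH k (k - 1) ×ˢ prefixSH 1 2 ×ˢ {false}) =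
        ENNReal.ofReal (q ^ k * p ^ (k - 1) * (p + (1 - γ) * p ^ 2 * q)) := fun k => by
    rw [measure_prefixSH_prod hν, measure_prefixSH_prod hν, hS, hH, hG, measure_univ]
    simp (disch := positivity) only [← ENNReal.ofReal_pow, ← ENNReal.ofReal_mul, mul_one]
    rw [← ENNReal.ofReal_add (by positivity) (by positivity)]
    congr 1
    ring
  have hpq : p * q ≠ 1 := by nlinarith
  rw [lintegral_Uh, hA, sum_congr rfl fun k _ => hC k,
    ← ENNReal.ofReal_sum_of_nonneg fun k _ => by positivity,
    ← ENNReal.ofReal_add (by positivity) (sum_nonneg fun k _ => by positivity), ← sum_mul,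
    sum_Icc_two_pow_mul_pow_pred hpq]
  congr 1
  ring

/-- With `(X_i)` and `(X'_i)` two independent i.i.d. Bernoulli sequences (probability `q`
of `S`, `p` of `H`) and `G'` an independent Bernoulli variable of parameter `γ`,
`E[U_h] = p²q + (p + (1-γ)p²q) · pq² (1 - (pq)^(n₁-1)) / (1 - pq)`. -/
theorem expected_Uh (q p γ : ℝ) (hq0 : 0 < q) (hq : q < 1 / 2) (hp : p = 1 - q)
    (hγ0 : 0 ≤ γ) (hγ1 : γ ≤ 1) (n₁ : ℕ) (hn₁ : 2 ≤ n₁)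
    (ν : Measure ((ℕ → Bool) × (ℕ → Bool) × Bool)) [IsProbabilityMeasure ν]
    (hν : ∀ (n : ℕ) (w w' : Fin n → Bool) (g : Bool),
      ν {x | (∀ i : Fin n, x.1 i = w i) ∧ (∀ i : Fin n, x.2.1 i = w' i) ∧ x.2.2 = g} =
        (∏ i : Fin n, (if w i then ENNReal.ofReal q else ENNReal.ofReal p)) *
          (∏ i : Fin n, (if w' i then ENNReal.ofReal q else ENNReal.ofReal p)) *
          (if g then ENNReal.ofReal γ else ENNReal.ofReal (1 - γ))) :
    ∫⁻ x, (Uh n₁ x : ℝ≥0∞) ∂ν =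
      ENNReal.ofReal (p ^ 2 * q +
        (p + (1 - γ) * p ^ 2 * q) * (p * q ^ 2) * (1 - (p * q) ^ (n₁ - 1)) /
          (1 - p * q)) :=
  expected_Uh_general q p γ hq0 hq hp hγ0 hγ1 n₁ ν hν
end

section
/- Let q be real with 0 < q < 1/2, p = 1 − q, and γ ∈ [0,1]. With the Ethereum parameter values n₁ = 6, K₁ = 7/8 and π = 1/32, the long-term apparent hashrate of the Ethereum selfish miner under the old difficulty adjustment formula strictly exceeds that of the Bitcoin selfish miner: q̃_{E,0} > q̃_B, where q̃_B = ( [(p − q)(1 + pq) + pq]·q − (p − q)p²q(1 − γ) )/( pq² + p − q ) and q̃_{E,0} = q̃_B + q̃_u·K₁ + q̃_n·π with q̃_u = p²q(1 − γ)(p − q)/( p − q + p²q ) and q̃_n = (p − q)·( q²(1 + p) − q^{n₁+1} − ( p + (1 − γ)p²q )·pq²·(1 − (pq)^{n₁−1})/(1 − pq) )/( p − q + p²q ). -/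
/-!
The difference `q̃_{E,0} - q̃_B = K₁ q̃_u + π q̃_n` is a positive combination of the uncle and
nephew rates, so it suffices that `q̃_u ≥ 0` and `q̃_n > 0`. The uncle rate is a product of
nonnegative factors. For the nephew rate, bounding `q^{n₁+1} ≤ q³`, `1 - (pq)^{n₁-1} ≤ 1` and
`γ ≥ 0` bounds its bracket below by `p q² (1 - 2q + 4q² - q³) / (1 - pq)`, positive for `q < 1/2`;
this works for every `n₁ ≥ 2`.
-/

section SelfishMining

variable {p q γ : ℝ}

lemma uncle_rate_nonneg (hq0 : 0 < q) (hq : q < 1 / 2) (hp : p = 1 - q) (hγ1 : γ ≤ 1) :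
    0 ≤ p ^ 2 * q * (1 - γ) * (p - q) / (p - q + p ^ 2 * q) := by
  have hpq : 0 < p - q := by linarith
  have hγ : 0 ≤ 1 - γ := by linarith
  positivity

lemma nephew_bracket_pos (hq0 : 0 < q) (hq : q < 1 / 2) (hp : p = 1 - q) (hγ0 : 0 ≤ γ)
    {n : ℕ} (hn : 2 ≤ n) :
    0 < q ^ 2 * (1 + p) - q ^ (n + 1) -
      (p + (1 - γ) * p ^ 2 * q) * (p * q ^ 2) * (1 - (p * q) ^ (n - 1)) / (1 - p * q) := by
  have hp0 : 0 < p := by linarith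
  have hpq0 : 0 ≤ p * q := by positivity
  have hpq1 : p * q < 1 := by nlinarith
  have hpow : q ^ (n + 1) ≤ q ^ 3 := pow_le_pow_of_le_one hq0.le (by linarith) (by omega)
  have hgeom0 : 0 ≤ 1 - (p * q) ^ (n - 1) := sub_nonneg.2 (pow_le_one₀ hpq0 hpq1.le)
  have hgeom1 : 1 - (p * q) ^ (n - 1) ≤ 1 := by linarith [pow_nonneg hpq0 (n - 1)]
  have hcoef : p + (1 - γ) * p ^ 2 * q ≤ p + p ^ 2 * q := by
    nlinarith [mul_nonneg hγ0 (by positivity : 0 ≤ p ^ 2 * q)]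
  have hnum : (p + (1 - γ) * p ^ 2 * q) * (p * q ^ 2) * (1 - (p * q) ^ (n - 1)) ≤
      (p + p ^ 2 * q) * (p * q ^ 2) :=
    calc _ ≤ (p + p ^ 2 * q) * (p * q ^ 2) * (1 - (p * q) ^ (n - 1)) := by gcongr
      _ ≤ (p + p ^ 2 * q) * (p * q ^ 2) := mul_le_of_le_one_right (by positivity) hgeom1
  have hworst : (p + p ^ 2 * q) * (p * q ^ 2) / (1 - p * q) < q ^ 2 * (1 + p) - q ^ 3 := by
    rw [div_lt_iff₀ (by linarith)]
    have hcubic : 0 < 1 - 2 * q + 4 * q ^ 2 - q ^ 3 := by nlinarith [pow_pos hq0 2]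
    have hdiff : (q ^ 2 * (1 + p) - q ^ 3) * (1 - p * q) - (p + p ^ 2 * q) * (p * q ^ 2) =
        p * q ^ 2 * (1 - 2 * q + 4 * q ^ 2 - q ^ 3) := by subst hp; ring
    linarith [mul_pos (mul_pos hp0 (pow_pos hq0 2)) hcubic]
  have hfrac := div_le_div_of_nonneg_right hnum (sub_nonneg.2 hpq1.le)
  linarith

lemma nephew_rate_pos (hq0 : 0 < q) (hq : q < 1 / 2) (hp : p = 1 - q) (hγ0 : 0 ≤ γ)
    {n : ℕ} (hn : 2 ≤ n) :
    0 < (p - q) * (q ^ 2 * (1 + p) - q ^ (n + 1) -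
        (p + (1 - γ) * p ^ 2 * q) * (p * q ^ 2) * (1 - (p * q) ^ (n - 1)) / (1 - p * q)) /
      (p - q + p ^ 2 * q) := by
  have hpq : 0 < p - q := by linarith
  have hbracket := nephew_bracket_pos hq0 hq hp hγ0 hn
  positivity

end SelfishMining

theorem ethereum_beats_bitcoin_general (q p γ : ℝ) (hq0 : 0 < q) (hq : q < 1 / 2)
    (hp : p = 1 - q) (hγ0 : 0 ≤ γ) (hγ1 : γ ≤ 1)
    (qB qu qn qE : ℝ)
    (hqu : qu = p ^ 2 * q * (1 - γ) * (p - q) / (p - q + p ^ 2 * q))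
    (hqn : qn = (p - q) *
        (q ^ 2 * (1 + p) - q ^ (6 + 1) -
          (p + (1 - γ) * p ^ 2 * q) * (p * q ^ 2) * (1 - (p * q) ^ (6 - 1)) /
            (1 - p * q)) /
      (p - q + p ^ 2 * q))
    (hqE : qE = qB + qu * (7 / 8) + qn * (1 / 32)) :
    qE > qB := by
  have hqu0 : 0 ≤ qu := hqu ▸ uncle_rate_nonneg hq0 hq hp hγ1
  have hqn0 : 0 < qn := hqn ▸ nephew_rate_pos hq0 hq hp hγ0 (by norm_num)
  linarith

/-- With the Ethereum parameter values `n₁ = 6`, `K₁ = 7/8`, `π = 1/32`, the long-term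
apparent hashrate of the Ethereum selfish miner with the old difficulty adjustment
formula strictly exceeds that of the Bitcoin selfish miner: `q̃_{E,0} > q̃_B`. -/
theorem ethereum_beats_bitcoin (q p γ : ℝ) (hq0 : 0 < q) (hq : q < 1 / 2)
    (hp : p = 1 - q) (hγ0 : 0 ≤ γ) (hγ1 : γ ≤ 1)
    (qB qu qn qE : ℝ)
    (hqB : qB = (((p - q) * (1 + p * q) + p * q) * q - (p - q) * p ^ 2 * q * (1 - γ)) /
      (p * q ^ 2 + p - q))
    (hqu : qu = p ^ 2 * q * (1 - γ) * (p - q) / (p - q + p ^ 2 * q))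
    (hqn : qn = (p - q) *
        (q ^ 2 * (1 + p) - q ^ (6 + 1) -
          (p + (1 - γ) * p ^ 2 * q) * (p * q ^ 2) * (1 - (p * q) ^ (6 - 1)) /
            (1 - p * q)) /
      (p - q + p ^ 2 * q))
    (hqE : qE = qB + qu * (7 / 8) + qn * (1 / 32)) :
    qE > qB :=
  ethereum_beats_bitcoin_general q p γ hq0 hq hp hγ0 hγ1 qB qu qn qE hqu hqn hqE
end
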